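/- arXiv:2407.07700 — 2 statements merged into one kernel-verified Lean document; each statement's English description precedes it below -/
import Mathlib

section
/- Let B ∼ Binomial(n-1, p) with p ∈ (0,1] and n ≥ 1. Then E[(1+B)^{-3/2}] ≤ √2 · (np)^{-3/2}. -/
open Finset

/-!
With `X = 1 / (1 + B)`, Cauchy–Schwarz gives `E[X^{3/2}]² ≤ E[X²] E[X]`. Both moments come from the
size-bias identity `E[B' g(B')] = n p E[g(1 + B)]` for `B' ∼ Binomial(n, p)`: taking `g k = 1 / k` gives
`E[X] ≤ 1 / (np)`, and taking `g k = 1 / (k (k + 1))` and then the first bound for `B'` gives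
`E[1 / ((1 + B)(2 + B))] ≤ 1 / (n (n + 1) p²)`, which controls `E[X²]` up to the factor 2.
-/

noncomputable def binomialExpect (m : ℕ) (p : ℝ) (f : ℕ → ℝ) : ℝ :=
  ∑ k ∈ range (m + 1), (m.choose k : ℝ) * p ^ k * (1 - p) ^ (m - k) * f k

namespace binomialExpect

variable {m : ℕ} {p : ℝ}

lemma mono (hp0 : 0 ≤ p) (hp1 : p ≤ 1) {f g : ℕ → ℝ} (hfg : ∀ k, f k ≤ g k) :
    binomialExpect m p f ≤ binomialExpect m p g := by
  have hq : 0 ≤ 1 - p := sub_nonneg.mpr hp1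
  unfold binomialExpect
  gcongr with k
  exact hfg k

lemma nonneg (hp0 : 0 ≤ p) (hp1 : p ≤ 1) {f : ℕ → ℝ} (hf : ∀ k, 0 ≤ f k) :
    0 ≤ binomialExpect m p f := by
  have hq : 0 ≤ 1 - p := sub_nonneg.mpr hp1
  exact sum_nonneg fun k _ => mul_nonneg (by positivity) (hf k)

lemma const_mul (c : ℝ) (f : ℕ → ℝ) :
    binomialExpect m p (fun k => c * f k) = c * binomialExpect m p f := by
  rw [binomialExpect, binomialExpect, mul_sum]
  exact sum_congr rfl fun k _ => by ring

lemma const_one : binomialExpect m p (fun _ => 1) = 1 := by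
  have h := (add_pow p (1 - p) m).symm
  rw [add_sub_cancel, one_pow] at h
  exact (sum_congr rfl fun k _ => by ring).trans h

/-- Size-bias identity: `1 + Binomial(m, p)` has the size-biased law of `Binomial(m + 1, p)`. -/
lemma natCast_mul (g : ℕ → ℝ) :
    binomialExpect (m + 1) p (fun k => k * g k) =
      (m + 1) * p * binomialExpect m p (fun k => g (k + 1)) := by
  rw [binomialExpect, sum_range_succ', binomialExpect, mul_sum]
  simp only [Nat.cast_zero, zero_mul, mul_zero, add_zero, Nat.add_sub_add_right]
  refine sum_congr rfl fun k _ => ?_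
  have h := congrArg (Nat.cast (R := ℝ)) (Nat.add_one_mul_choose_eq m k)
  push_cast at h ⊢
  linear_combination -(p ^ (k + 1) * (1 - p) ^ (m - k) * g (k + 1)) * h

lemma inv_succ_le (hp0 : 0 < p) (hp1 : p ≤ 1) :
    binomialExpect m p (fun k => ((k : ℝ) + 1)⁻¹) ≤ ((m + 1) * p)⁻¹ := by
  rw [← one_div, le_div_iff₀ (by positivity)]
  calc binomialExpect m p (fun k => ((k : ℝ) + 1)⁻¹) * ((m + 1) * p)
      = binomialExpect (m + 1) p (fun k => k * (k : ℝ)⁻¹) := by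
        rw [natCast_mul]; push_cast; ring
    _ ≤ binomialExpect (m + 1) p (fun _ => 1) := mono hp0.le hp1 fun _ => mul_inv_le_one
    _ = 1 := const_one

lemma inv_succ_mul_succ_succ_le (hp0 : 0 < p) (hp1 : p ≤ 1) :
    binomialExpect m p (fun k => (((k : ℝ) + 1) * ((k : ℝ) + 2))⁻¹) ≤
      ((m + 1) * (m + 2) * p ^ 2)⁻¹ := by
  rw [← one_div, le_div_iff₀ (by positivity)]
  calc binomialExpect m p (fun k => (((k : ℝ) + 1) * ((k : ℝ) + 2))⁻¹) *
        ((m + 1) * (m + 2) * p ^ 2)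
      = binomialExpect (m + 1) p (fun k => k * ((k : ℝ) * (k + 1))⁻¹) * ((m + 2) * p) := by
        rw [natCast_mul]; push_cast
        simp only [add_assoc, one_add_one_eq_two]
        ring
    _ ≤ binomialExpect (m + 1) p (fun k => ((k : ℝ) + 1)⁻¹) * ((m + 2) * p) := by
        gcongr 1
        refine mono hp0.le hp1 fun k => ?_
        rw [mul_inv, ← mul_assoc]
        exact mul_le_of_le_one_left (by positivity) mul_inv_le_one
    _ ≤ ((m + 2) * p)⁻¹ * ((m + 2) * p) := by
        gcongr
        refine (inv_succ_le (m := m + 1) hp0 hp1).trans_eq ?_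
        push_cast; ring
    _ = 1 := inv_mul_cancel₀ (by positivity)

lemma inv_succ_sq_le (hp0 : 0 < p) (hp1 : p ≤ 1) :
    binomialExpect m p (fun k => ((k : ℝ) + 1)⁻¹ ^ 2) ≤ 2 * (((m + 1) * p) ^ 2)⁻¹ := by
  have hsq : ∀ k : ℕ, ((k : ℝ) + 1)⁻¹ ^ 2 ≤ 2 * (((k : ℝ) + 1) * ((k : ℝ) + 2))⁻¹ := fun k => by
    rw [inv_pow, ← div_eq_mul_inv, inv_eq_one_div, div_le_div_iff₀ (by positivity) (by positivity)]
    nlinarith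
  calc binomialExpect m p (fun k => ((k : ℝ) + 1)⁻¹ ^ 2)
      ≤ 2 * binomialExpect m p (fun k => (((k : ℝ) + 1) * ((k : ℝ) + 2))⁻¹) :=
        (mono hp0.le hp1 hsq).trans_eq (const_mul _ _)
    _ ≤ 2 * ((m + 1) * (m + 2) * p ^ 2)⁻¹ := by gcongr; exact inv_succ_mul_succ_succ_le hp0 hp1
    _ ≤ 2 * (((m + 1) * p) ^ 2)⁻¹ := by gcongr; nlinarith

end binomialExpect

lemma sq_sum_mul_rpow_three_halves_le {ι : Type*} (s : Finset ι) (w x : ι → ℝ)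
    (hw : ∀ i ∈ s, 0 ≤ w i) (hx : ∀ i ∈ s, 0 ≤ x i) :
    (∑ i ∈ s, w i * x i ^ (3 / 2 : ℝ)) ^ 2 ≤ (∑ i ∈ s, w i * x i ^ 2) * ∑ i ∈ s, w i * x i := by
  refine sum_sq_le_sum_mul_sum_of_sq_le_mul s (fun i hi => mul_nonneg (hw i hi) (sq_nonneg _))
    (fun i hi => mul_nonneg (hw i hi) (hx i hi)) fun i hi => le_of_eq ?_
  rw [mul_pow, ← Real.rpow_natCast (x i ^ _), ← Real.rpow_mul (hx i hi)]
  norm_num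
  ring

/-- For `B ∼ Binomial(n-1, p)` with `p ∈ (0,1]` and `n ≥ 1`,
`E[(1+B)^{-3/2}] ≤ √2 · (np)^{-3/2}`. -/
theorem binomial_neg_three_half_moment (n : ℕ) (hn : 1 ≤ n) (p : ℝ) (hp0 : 0 < p) (hp1 : p ≤ 1) :
    ∑ k ∈ Finset.range n,
        ((n - 1).choose k : ℝ) * p ^ k * (1 - p) ^ (n - 1 - k) * (1 + (k : ℝ)) ^ (-(3 / 2) : ℝ)
      ≤ Real.sqrt 2 * ((n : ℝ) * p) ^ (-(3 / 2) : ℝ) := by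
  obtain ⟨m, rfl⟩ : ∃ m, n = m + 1 := ⟨n - 1, by omega⟩
  have hq : 0 ≤ 1 - p := sub_nonneg.mpr hp1
  have hmp : 0 < ((m : ℝ) + 1) * p := by positivity
  set x : ℕ → ℝ := fun k => ((k : ℝ) + 1)⁻¹
  have hmoment : ∑ k ∈ Finset.range (m + 1),
        ((m + 1 - 1).choose k : ℝ) * p ^ k * (1 - p) ^ (m + 1 - 1 - k) * (1 + (k : ℝ)) ^ (-(3 / 2) : ℝ)
      = binomialExpect m p (fun k => x k ^ (3 / 2 : ℝ)) := by
    simp only [binomialExpect, Nat.add_sub_cancel, x]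
    refine sum_congr rfl fun k _ => ?_
    rw [Real.rpow_neg (by positivity), Real.inv_rpow (by positivity), add_comm (1 : ℝ)]
  have hCS : binomialExpect m p (fun k => x k ^ (3 / 2 : ℝ)) ^ 2
      ≤ binomialExpect m p (fun k => x k ^ 2) * binomialExpect m p x :=
    sq_sum_mul_rpow_three_halves_le _ _ _ (fun k _ => by positivity) (fun k _ => by positivity)
  have hrhs : (Real.sqrt 2 * (((m : ℝ) + 1) * p) ^ (-(3 / 2) : ℝ)) ^ 2
      = 2 * ((((m : ℝ) + 1) * p) ^ 2)⁻¹ * (((m : ℝ) + 1) * p)⁻¹ := by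
    rw [mul_pow, Real.sq_sqrt zero_le_two, ← Real.rpow_natCast, ← Real.rpow_mul hmp.le,
      show (-(3 / 2) : ℝ) * (2 : ℕ) = -(3 : ℕ) by norm_num, Real.rpow_neg hmp.le, Real.rpow_natCast,
      pow_succ, mul_inv, mul_assoc]
  rw [hmoment, Nat.cast_add_one]
  refine le_of_pow_le_pow_left₀ two_ne_zero (by positivity) ?_
  rw [hrhs]
  exact hCS.trans <| mul_le_mul (binomialExpect.inv_succ_sq_le hp0 hp1)
    (binomialExpect.inv_succ_le hp0 hp1) (binomialExpect.nonneg hp0.le hp1 fun k => by positivity)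
    (by positivity)
end

section
/- Let Y₁,...,Yₙ be i.i.d. with P(Yᵢ = j) = p > 0 and let A_j = {ℓ : Y_ℓ = j}. Then P(A_j = ∅) = (1-p)^n, and Σ_{A ≠ ∅} P(A_j = A)·√(π/(2|A|)) = √(π/2)·E[|A_j|^{-1/2}·1{|A_j| ≥ 1}] = √(π/2)·E[(1+B)^{-3/2}]·np ≤ √(π/(np)), where B ∼ Binomial(n-1, p). -/
open MeasureTheory ProbabilityTheory Finset

private lemma binom_sum_one {p : ℝ} (N : ℕ) :
    ∑ k ∈ Finset.range (N + 1), (N.choose k : ℝ) * p ^ k * (1 - p) ^ (N - k) = 1 := by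
  calc ∑ k ∈ Finset.range (N + 1), (N.choose k : ℝ) * p ^ k * (1 - p) ^ (N - k)
      = (p + (1 - p)) ^ N := by
        rw [add_pow]
        exact Finset.sum_congr rfl fun k _ => by ring
    _ = 1 := by norm_num

/-- Let `Y₁,...,Yₙ` be i.i.d. with `P(Yᵢ = j) = p > 0` and
`A_j = {ℓ : Y_ℓ = j}`. Then `P(A_j = ∅) = (1-p)^n`; the weighted sum over nonempty
configurations satisfies (by size-biasing, with `|A_j| ∼ Binomial(n,p)`)
`Σ_{k=1}^n C(n,k) k^{-1/2} p^k (1-p)^{n-k} = np·E[(1+B)^{-3/2}]` with `B ∼ Binomial(n-1,p)`;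
and in particular `√(π/2)·E[(1+B)^{-3/2}]·np ≤ √(π/(np))`, so
`√(π/2)·Σ_{A ≠ ∅} P(A_j = A)/√|A| ≤ √(π/(np))`. -/
theorem empty_cell_and_size_bias_bound
    (Ω : Type*) [MeasurableSpace Ω] (μ : Measure Ω) [IsProbabilityMeasure μ]
    (n : ℕ) (hn : 1 ≤ n) (p : ℝ) (hp0 : 0 < p) (hp1 : p ≤ 1)
    (j : ℕ) (Y : Fin n → Ω → ℕ) (hmeas : ∀ ℓ, Measurable (Y ℓ))
    (hindep : iIndepFun Y μ)
    (hmarg : ∀ ℓ : Fin n, μ {ω | Y ℓ ω = j} = ENNReal.ofReal p) :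
    μ {ω | ∀ ℓ : Fin n, Y ℓ ω ≠ j} = ENNReal.ofReal ((1 - p) ^ n) ∧
    (∑ k ∈ Finset.Icc 1 n, (n.choose k : ℝ) * ((k : ℝ) ^ (-(1 / 2) : ℝ)) * p ^ k * (1 - p) ^ (n - k))
      = (n : ℝ) * p * ∑ k ∈ Finset.range n,
          ((n - 1).choose k : ℝ) * p ^ k * (1 - p) ^ (n - 1 - k) * (1 + (k : ℝ)) ^ (-(3 / 2) : ℝ) ∧
    Real.sqrt (Real.pi / 2) * ((n : ℝ) * p) * (∑ k ∈ Finset.range n,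
          ((n - 1).choose k : ℝ) * p ^ k * (1 - p) ^ (n - 1 - k) * (1 + (k : ℝ)) ^ (-(3 / 2) : ℝ))
      ≤ Real.sqrt (Real.pi / ((n : ℝ) * p)) ∧
    Real.sqrt (Real.pi / 2) *
        (∑ k ∈ Finset.Icc 1 n, (n.choose k : ℝ) * ((k : ℝ) ^ (-(1 / 2) : ℝ)) * p ^ k * (1 - p) ^ (n - k))
      ≤ Real.sqrt (Real.pi / ((n : ℝ) * p)) := by
  obtain ⟨m, rfl⟩ : ∃ m, n = m + 1 := ⟨n - 1, (Nat.succ_pred_eq_of_pos hn).symm⟩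
  have hq : (0:ℝ) ≤ 1 - p := by linarith
  -- Part 1
  have part1 : μ {ω | ∀ ℓ : Fin (m+1), Y ℓ ω ≠ j} = ENNReal.ofReal ((1 - p) ^ (m+1)) := by
    have hset : {ω | ∀ ℓ : Fin (m+1), Y ℓ ω ≠ j} = ⋂ ℓ, (Y ℓ) ⁻¹' ({j}ᶜ) := by
      ext ω; simp [Set.mem_iInter]
    have hms : ∀ i : Fin (m+1),
        MeasurableSet[MeasurableSpace.comap (Y i) inferInstance] ((Y i) ⁻¹' ({j}ᶜ)) :=
      fun i => ⟨{j}ᶜ, (MeasurableSet.singleton j).compl, rfl⟩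
    rw [hset, hindep.meas_iInter hms]
    have hone : ∀ i : Fin (m+1), μ ((Y i) ⁻¹' ({j}ᶜ)) = ENNReal.ofReal (1 - p) := by
      intro i
      have hps : (Y i) ⁻¹' ({j}ᶜ) = ({ω | Y i ω = j})ᶜ := by ext ω; simp
      rw [hps, prob_compl_eq_one_sub (s := {ω | Y i ω = j}) (hmeas i (MeasurableSet.singleton j)), hmarg i,
        ENNReal.ofReal_sub 1 hp0.le, ENNReal.ofReal_one]
    simp only [hone, Finset.prod_const, Finset.card_univ, Fintype.card_fin]
    rw [← ENNReal.ofReal_pow hq]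
  refine ⟨part1, ?_⟩
  have hx : ∀ k : ℕ, (0:ℝ) < 1 + (k:ℝ) := fun k => by positivity
  have hcoeff : ∀ k : ℕ, ((m+1:ℕ):ℝ) * (m.choose k : ℝ) = ((m+1).choose (k+1) : ℝ) * ((k:ℝ)+1) := by
    intro k
    exact_mod_cast congrArg (Nat.cast : ℕ → ℝ) (Nat.add_one_mul_choose_eq m k)
  -- Part 2: equality
  have part2 : (∑ k ∈ Finset.Icc 1 (m+1), ((m+1).choose k : ℝ) * ((k : ℝ) ^ (-(1 / 2) : ℝ)) * p ^ k * (1-p) ^ (m+1 - k))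
      = ((m+1 : ℕ) : ℝ) * p * ∑ k ∈ Finset.range (m+1),
          ((m+1-1).choose k : ℝ) * p ^ k * (1-p) ^ (m+1-1 - k) * (1 + (k : ℝ)) ^ (-(3 / 2) : ℝ) := by
    simp only [Nat.add_sub_cancel]
    rw [← Finset.Ico_add_one_right_eq_Icc, Finset.sum_Ico_eq_sum_range]
    simp only [Finset.mul_sum]
    apply Finset.sum_congr (by norm_num)
    intro i hi
    simp only [Finset.mem_range] at hi
    have h1 : (m + 1 - (1 + i)) = m - i := by omega
    have h2 : ((1 + i : ℕ) : ℝ) = 1 + (i:ℝ) := by push_cast; ring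
    rw [h1, h2]
    have hr : (1 + (i:ℝ)) ^ (-(1/2) : ℝ) = (1 + (i:ℝ)) * (1 + (i:ℝ)) ^ (-(3/2) : ℝ) := by
      rw [show (-(1/2) : ℝ) = 1 + -(3/2) by norm_num, Real.rpow_add (hx i), Real.rpow_one]
    rw [hr]
    have h3 : ((m+1).choose (1+i) : ℝ) * (1 + (i:ℝ)) = ((m+1:ℕ):ℝ) * (m.choose i : ℝ) := by
      rw [hcoeff i, Nat.add_comm 1 i]; ring
    have h4 : p ^ (1+i) = p * p ^ i := by rw [pow_add, pow_one]
    calc ((m+1).choose (1+i) : ℝ) * ((1 + (i:ℝ)) * (1 + (i:ℝ)) ^ (-(3/2) : ℝ)) * p ^ (1+i) * (1-p) ^ (m-i)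
        = (((m+1).choose (1+i) : ℝ) * (1 + (i:ℝ))) * (1 + (i:ℝ)) ^ (-(3/2) : ℝ) * (p * p ^ i) * (1-p) ^ (m-i) := by
          rw [h4]; ring
      _ = ((m+1:ℕ):ℝ) * p * ((m.choose i : ℝ) * p ^ i * (1-p) ^ (m - i) * (1 + (i:ℝ)) ^ (-(3/2) : ℝ)) := by
          rw [h3]; ring
  -- Part 3 setup
  set t : ℝ := ((m+1 : ℕ) : ℝ) * p with htdef
  have ht : 0 < t := by positivity
  set w : ℕ → ℝ := fun k => (m.choose k : ℝ) * p ^ k * (1-p) ^ (m - k) with hwdef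
  have hwnn : ∀ k, 0 ≤ w k := fun k => by simp only [hwdef]; positivity
  set S : ℝ := ∑ k ∈ Finset.range (m+1), w k * (1 + (k:ℝ)) ^ (-(3/2) : ℝ) with hSdef
  have hSnn : 0 ≤ S := Finset.sum_nonneg fun k _ => mul_nonneg (hwnn k) (Real.rpow_nonneg (hx k).le _)
  -- bound A
  have hA : ∑ k ∈ Finset.range (m+1), w k * (1 + (k:ℝ))⁻¹ ≤ 1 / t := by
    rw [le_div_iff₀ ht, Finset.sum_mul]
    have hterm : ∀ k ∈ Finset.range (m+1), w k * (1 + (k:ℝ))⁻¹ * t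
        = ((m+1).choose (k+1) : ℝ) * p ^ (k+1) * (1-p) ^ (m+1 - (k+1)) := by
      intro k _
      have h5 : m + 1 - (k+1) = m - k := by omega
      rw [h5]
      have e1 : w k * (1 + (k:ℝ))⁻¹ * t
          = (((m+1:ℕ):ℝ) * (m.choose k : ℝ)) * ((1 + (k:ℝ))⁻¹ * (p ^ (k+1) * (1-p) ^ (m-k))) := by
        simp only [hwdef, htdef, pow_succ]; ring
      rw [e1, hcoeff k]
      have e2 : (1 + (k:ℝ)) * (1 + (k:ℝ))⁻¹ = 1 := mul_inv_cancel₀ (hx k).ne'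
      calc (((m+1).choose (k+1) : ℝ) * ((k:ℝ)+1)) * ((1 + (k:ℝ))⁻¹ * (p ^ (k+1) * (1-p) ^ (m-k)))
          = ((m+1).choose (k+1) : ℝ) * p ^ (k+1) * (1-p) ^ (m-k) * ((1 + (k:ℝ)) * (1 + (k:ℝ))⁻¹) := by
            ring
        _ = ((m+1).choose (k+1) : ℝ) * p ^ (k+1) * (1-p) ^ (m-k) := by rw [e2, mul_one]
    calc ∑ k ∈ Finset.range (m+1), w k * (1 + (k:ℝ))⁻¹ * t
        = ∑ k ∈ Finset.range (m+1), ((m+1).choose (k+1) : ℝ) * p ^ (k+1) * (1-p) ^ (m+1-(k+1)) :=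
          Finset.sum_congr rfl hterm
      _ ≤ ∑ k ∈ Finset.range (m+2), ((m+1).choose k : ℝ) * p ^ k * (1-p) ^ (m+1-k) := by
          rw [Finset.sum_range_succ' (fun k => ((m+1).choose k : ℝ) * p ^ k * (1-p) ^ (m+1-k)) (m+1)]
          have : (0:ℝ) ≤ ((m+1).choose 0 : ℝ) * p ^ 0 * (1-p) ^ (m+1-0) := by positivity
          linarith
      _ = 1 := binom_sum_one (m+1)
  -- bound B
  have hcoeff2 : ∀ k : ℕ, ((m+2:ℕ):ℝ) * ((m+1:ℕ):ℝ) * (m.choose k : ℝ)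
      = ((m+2).choose (k+2) : ℝ) * ((k:ℝ)+2) * ((k:ℝ)+1) := by
    intro k
    have h1 := Nat.add_one_mul_choose_eq m k
    have h2 := Nat.add_one_mul_choose_eq (m+1) (k+1)
    have hnat : (m+2) * ((m+1) * m.choose k) = ((m+2).choose (k+2) * (k+2)) * (k+1) := by
      rw [h1, ← Nat.mul_assoc, h2]
    have := congrArg (Nat.cast : ℕ → ℝ) hnat
    push_cast at this ⊢
    linarith
  have hB : ∑ k ∈ Finset.range (m+1), w k * ((1 + (k:ℝ))^2)⁻¹ ≤ 2 / t^2 := by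
    have step2 : ∑ k ∈ Finset.range (m+1), w k * (((k:ℝ)+1) * ((k:ℝ)+2))⁻¹ ≤ 1 / t^2 := by
      rw [le_div_iff₀ (by positivity), Finset.sum_mul]
      have hterm : ∀ k ∈ Finset.range (m+1), w k * (((k:ℝ)+1) * ((k:ℝ)+2))⁻¹ * t^2
          ≤ ((m+2).choose (k+2) : ℝ) * p ^ (k+2) * (1-p) ^ (m+2 - (k+2)) := by
        intro k _
        have h5 : m + 2 - (k+2) = m - k := by omega
        rw [h5]
        have hmono : t^2 ≤ ((m+2:ℕ):ℝ) * ((m+1:ℕ):ℝ) * p^2 := by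
          simp only [htdef, mul_pow]
          have : ((m+1:ℕ):ℝ)^2 ≤ ((m+2:ℕ):ℝ) * ((m+1:ℕ):ℝ) := by push_cast; nlinarith [Nat.cast_nonneg (α := ℝ) m]
          nlinarith [sq_nonneg p]
        have hle : w k * (((k:ℝ)+1) * ((k:ℝ)+2))⁻¹ * t^2
            ≤ w k * (((k:ℝ)+1) * ((k:ℝ)+2))⁻¹ * (((m+2:ℕ):ℝ) * ((m+1:ℕ):ℝ) * p^2) :=
          mul_le_mul_of_nonneg_left hmono (mul_nonneg (hwnn k) (by positivity))
        refine hle.trans (le_of_eq ?_)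
        have e1 : w k * (((k:ℝ)+1) * ((k:ℝ)+2))⁻¹ * (((m+2:ℕ):ℝ) * ((m+1:ℕ):ℝ) * p^2)
            = (((m+2:ℕ):ℝ) * ((m+1:ℕ):ℝ) * (m.choose k : ℝ))
              * ((((k:ℝ)+1) * ((k:ℝ)+2))⁻¹ * (p ^ (k+2) * (1-p) ^ (m-k))) := by
          simp only [hwdef]
          rw [pow_add]
          ring
        rw [e1, hcoeff2 k]
        have e2 : (((k:ℝ)+1) * ((k:ℝ)+2)) * (((k:ℝ)+1) * ((k:ℝ)+2))⁻¹ = 1 :=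
          mul_inv_cancel₀ (by positivity)
        calc (((m+2).choose (k+2) : ℝ) * ((k:ℝ)+2) * ((k:ℝ)+1))
              * ((((k:ℝ)+1) * ((k:ℝ)+2))⁻¹ * (p ^ (k+2) * (1-p) ^ (m-k)))
            = ((m+2).choose (k+2) : ℝ) * p ^ (k+2) * (1-p) ^ (m-k)
              * ((((k:ℝ)+1) * ((k:ℝ)+2)) * (((k:ℝ)+1) * ((k:ℝ)+2))⁻¹) := by ring
          _ = ((m+2).choose (k+2) : ℝ) * p ^ (k+2) * (1-p) ^ (m-k) := by rw [e2, mul_one]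
      calc ∑ k ∈ Finset.range (m+1), w k * (((k:ℝ)+1) * ((k:ℝ)+2))⁻¹ * t^2
          ≤ ∑ k ∈ Finset.range (m+1), ((m+2).choose (k+2) : ℝ) * p ^ (k+2) * (1-p) ^ (m+2-(k+2)) :=
            Finset.sum_le_sum hterm
        _ ≤ ∑ k ∈ Finset.range (m+3), ((m+2).choose k : ℝ) * p ^ k * (1-p) ^ (m+2-k) := by
            rw [Finset.sum_range_succ' (fun k => ((m+2).choose k : ℝ) * p ^ k * (1-p) ^ (m+2-k)) (m+2),
              Finset.sum_range_succ' (fun k => ((m+2).choose (k+1) : ℝ) * p ^ (k+1) * (1-p) ^ (m+2-(k+1))) (m+1)]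
            have h7 : (0:ℝ) ≤ ((m+2).choose 0 : ℝ) * p ^ 0 * (1-p) ^ (m+2-0) := by positivity
            have h8 : (0:ℝ) ≤ ((m+2).choose (0+1) : ℝ) * p ^ (0+1) * (1-p) ^ (m+2-(0+1)) := by positivity
            linarith
        _ = 1 := binom_sum_one (m+2)
    have step1 : ∀ k ∈ Finset.range (m+1), w k * ((1 + (k:ℝ))^2)⁻¹
        ≤ w k * (2 * (((k:ℝ)+1) * ((k:ℝ)+2))⁻¹) := by
      intro k _
      apply mul_le_mul_of_nonneg_left _ (hwnn k)
      have h0 : (0:ℝ) < ((k:ℝ)+1) * ((k:ℝ)+2) := by positivity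
      have hc : ((k:ℝ)+1) * ((k:ℝ)+2) ≤ 2 * (1 + (k:ℝ))^2 := by nlinarith [sq_nonneg ((k:ℝ)+1)]
      calc ((1 + (k:ℝ))^2)⁻¹ = 2 * (2 * (1 + (k:ℝ))^2)⁻¹ := by
            rw [mul_inv]
            field_simp
        _ ≤ 2 * (((k:ℝ)+1) * ((k:ℝ)+2))⁻¹ := by
            apply mul_le_mul_of_nonneg_left (inv_anti₀ h0 hc) (by norm_num)
    calc ∑ k ∈ Finset.range (m+1), w k * ((1 + (k:ℝ))^2)⁻¹
        ≤ ∑ k ∈ Finset.range (m+1), w k * (2 * (((k:ℝ)+1) * ((k:ℝ)+2))⁻¹) :=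
          Finset.sum_le_sum step1
      _ = 2 * ∑ k ∈ Finset.range (m+1), w k * (((k:ℝ)+1) * ((k:ℝ)+2))⁻¹ := by
          rw [Finset.mul_sum]; exact Finset.sum_congr rfl fun k _ => by ring
      _ ≤ 2 * (1 / t^2) := by linarith
      _ = 2 / t^2 := by ring
  -- Cauchy-Schwarz
  have hCS : S^2 ≤ (∑ k ∈ Finset.range (m+1), w k * (1 + (k:ℝ))⁻¹)
      * ∑ k ∈ Finset.range (m+1), w k * ((1 + (k:ℝ))^2)⁻¹ := by
    apply Finset.sum_sq_le_sum_mul_sum_of_sq_eq_mul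
    · intro k _; exact mul_nonneg (hwnn k) (by positivity)
    · intro k _; exact mul_nonneg (hwnn k) (by positivity)
    · intro k _
      have hxk := hx k
      have hsq : ((1 + (k:ℝ)) ^ (-(3/2) : ℝ))^2 = (1 + (k:ℝ)) ^ (-(3:ℝ)) := by
        rw [← Real.rpow_natCast ((1 + (k:ℝ)) ^ (-(3/2) : ℝ)) 2, ← Real.rpow_mul hxk.le]
        norm_num
      have h3 : (1 + (k:ℝ)) ^ (-(3:ℝ)) = (1 + (k:ℝ))⁻¹ * ((1 + (k:ℝ))^2)⁻¹ := by
        rw [show (-(3:ℝ)) = (-1 : ℝ) + (-2 : ℝ) by norm_num, Real.rpow_add hxk,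
          Real.rpow_neg_one, show ((-2:ℝ)) = -((2:ℕ):ℝ) by norm_num,
          Real.rpow_neg hxk.le, Real.rpow_natCast]
      rw [mul_pow, hsq, h3]
      ring
  have hS2 : S^2 ≤ 2 / t^3 := by
    have hBnn : (0:ℝ) ≤ ∑ k ∈ Finset.range (m+1), w k * ((1 + (k:ℝ))^2)⁻¹ :=
      Finset.sum_nonneg fun k _ => mul_nonneg (hwnn k) (by positivity)
    have := hCS.trans (mul_le_mul hA hB hBnn (by positivity))
    calc S^2 ≤ 1/t * (2/t^2) := this
      _ = 2 / t^3 := by field_simp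
  have hSle : S ≤ Real.sqrt 2 / (t * Real.sqrt t) := by
    have h1 : S ≤ Real.sqrt (2 / t^3) := by
      exact (Real.le_sqrt hSnn (by positivity)).mpr hS2
    have h2 : Real.sqrt (2 / t^3) = Real.sqrt 2 / (t * Real.sqrt t) := by
      rw [Real.sqrt_div' 2 (by positivity)]
      · congr 1
        rw [pow_succ, Real.sqrt_mul (sq_nonneg t), Real.sqrt_sq ht.le]
    rw [← h2]; exact h1
  have part3 : Real.sqrt (Real.pi / 2) * t * S ≤ Real.sqrt (Real.pi / t) := by
    have hst : 0 < Real.sqrt t := Real.sqrt_pos.mpr ht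
    calc Real.sqrt (Real.pi / 2) * t * S
        ≤ Real.sqrt (Real.pi / 2) * t * (Real.sqrt 2 / (t * Real.sqrt t)) := by
          apply mul_le_mul_of_nonneg_left hSle (by positivity)
      _ = Real.sqrt (Real.pi / 2) * Real.sqrt 2 / Real.sqrt t := by field_simp
      _ = Real.sqrt Real.pi / Real.sqrt t := by
          rw [← Real.sqrt_mul (by positivity : (0:ℝ) ≤ Real.pi / 2)]
          norm_num
      _ = Real.sqrt (Real.pi / t) := by rw [Real.sqrt_div Real.pi_pos.le]
  have hSmatch : (∑ k ∈ Finset.range (m+1),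
      ((m+1-1).choose k : ℝ) * p ^ k * (1-p) ^ (m+1-1 - k) * (1 + (k : ℝ)) ^ (-(3 / 2) : ℝ)) = S := by
    simp only [hSdef, hwdef, Nat.add_sub_cancel]
  refine ⟨part2, ?_, ?_⟩
  · rw [hSmatch]; exact part3
  · rw [part2, hSmatch, ← mul_assoc]; exact part3
end
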